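/- arXiv:1610.01568 — 3 statements merged into one kernel-verified Lean document; each statement's English description precedes it below -/
import Mathlib

section
/- For any finite tree T with maximum degree Δ(T) ≥ 3, the independent domination number satisfies 2·i(T) ≤ Δ(T)·γ(T). -/
/-!
Take a minimum dominating set `D` and a maximum independent subset `S` of `D`. Since trees are
bipartite, one colour class of `D` is independent, so `|D| ≤ 2|S|`, and by maximality `S`
dominates `D`. Extend `S` by a maximal independent set `M` of the vertices not dominated by `S`.
Each vertex of `M` lies outside `D`, so it has a neighbour in `D \ S`, and each vertex of `D \ S`
spends one of its at most `Δ` edges on a neighbour in `S`; hence `|M| ≤ (Δ - 1) |D \ S|`. With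
`|D \ S| ≤ |S|` this gives `2 |S ∪ M| ≤ Δ |D|`.
-/

open Finset

/-- `D` is a dominating set of `G`: every vertex outside `D` has a neighbor in `D`. -/
def IsDomSet {V : Type*} (G : SimpleGraph V) (D : Finset V) : Prop :=
  ∀ v ∉ D, ∃ u ∈ D, G.Adj u v

/-- `D` is an independent set of `G`. -/
def IsIndepSet {V : Type*} (G : SimpleGraph V) (D : Finset V) : Prop :=
  ∀ u ∈ D, ∀ v ∈ D, ¬ G.Adj u v

/-- The domination number. -/
noncomputable def domNum {V : Type*} [Fintype V] (G : SimpleGraph V) : ℕ :=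
  sInf {n | ∃ D : Finset V, IsDomSet G D ∧ D.card = n}

/-- The independent domination number. -/
noncomputable def indDomNum {V : Type*} [Fintype V] (G : SimpleGraph V) : ℕ :=
  sInf {n | ∃ D : Finset V, IsDomSet G D ∧ IsIndepSet G D ∧ D.card = n}

section IndependentDomination

variable {V : Type*} {G : SimpleGraph V}

lemma exists_isDomSet_card_eq_domNum [Fintype V] (G : SimpleGraph V) :
    ∃ D : Finset V, IsDomSet G D ∧ #D = domNum G :=
  Nat.sInf_mem (s := {n | ∃ D : Finset V, IsDomSet G D ∧ #D = n})
    ⟨#(univ : Finset V), univ, fun v hv => absurd (mem_univ v) hv, rfl⟩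

lemma indDomNum_le_card [Fintype V] {I : Finset V} (hdom : IsDomSet G I) (hind : IsIndepSet G I) :
    indDomNum G ≤ #I :=
  Nat.sInf_le ⟨I, hdom, hind, rfl⟩

lemma IsIndepSet.insert [DecidableEq V] {S : Finset V} (hS : IsIndepSet G S) {v : V}
    (hv : ∀ u ∈ S, ¬ G.Adj u v) : IsIndepSet G (insert v S) := by
  intro a ha b hb hab
  rcases mem_insert.mp ha with rfl | haS <;> rcases mem_insert.mp hb with rfl | hbS
  · exact G.irrefl hab
  · exact hv b hbS hab.symm
  · exact hv a haS hab
  · exact hS a haS b hbS hab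

lemma IsIndepSet.union [DecidableEq V] {S M : Finset V} (hS : IsIndepSet G S)
    (hM : IsIndepSet G M) (hSM : ∀ u ∈ S, ∀ m ∈ M, ¬ G.Adj u m) : IsIndepSet G (S ∪ M) := by
  intro a ha b hb hab
  rcases mem_union.mp ha with ha | ha <;> rcases mem_union.mp hb with hb | hb
  · exact hS a ha b hb hab
  · exact hSM a ha b hb hab
  · exact hSM b hb a ha hab.symm
  · exact hM a ha b hb hab

lemma exists_maximum_isIndepSet_subset (G : SimpleGraph V) (A : Finset V) :
    ∃ S ⊆ A, IsIndepSet G S ∧ ∀ S' ⊆ A, IsIndepSet G S' → #S' ≤ #S := by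
  classical
  obtain ⟨S, hS, hmax⟩ := exists_max_image {S ∈ A.powerset | IsIndepSet G S} card
    ⟨∅, mem_filter.mpr ⟨empty_mem_powerset A, by simp [IsIndepSet]⟩⟩
  rw [mem_filter, mem_powerset] at hS
  exact ⟨S, hS.1, hS.2, fun S' hS'A hS' => hmax S' (mem_filter.mpr ⟨mem_powerset.mpr hS'A, hS'⟩)⟩

lemma exists_adj_of_maximum_isIndepSet {A S : Finset V} (hSA : S ⊆ A) (hS : IsIndepSet G S)
    (hmax : ∀ S' ⊆ A, IsIndepSet G S' → #S' ≤ #S) {v : V} (hvA : v ∈ A) (hvS : v ∉ S) :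
    ∃ u ∈ S, G.Adj u v := by
  classical
  by_contra! hv
  have := hmax (insert v S) (insert_subset hvA hSA) (hS.insert hv)
  rw [card_insert_of_notMem hvS] at this
  omega

lemma card_le_mul_of_maximum_isIndepSet {n : ℕ} (hG : G.Colorable n) {A S : Finset V}
    (hmax : ∀ S' ⊆ A, IsIndepSet G S' → #S' ≤ #S) : #A ≤ n * #S := by
  obtain ⟨c⟩ := hG
  have hclass : ∀ i, IsIndepSet G {v ∈ A | c v = i} := by
    intro i u hu v hv huv
    exact c.valid huv ((mem_filter.mp hu).2.trans (mem_filter.mp hv).2.symm)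
  calc #A = ∑ i, #{v ∈ A | c v = i} := card_eq_sum_card_fiberwise fun v _ => mem_univ (c v)
    _ ≤ ∑ _i : Fin n, #S := sum_le_sum fun i _ => hmax _ (filter_subset _ A) (hclass i)
    _ = n * #S := by simp

lemma card_le_card_mul_maxDegree_sub_one [Fintype V] [DecidableRel G.Adj] {M B : Finset V}
    (hM : ∀ m ∈ M, ∃ v ∈ B, G.Adj v m) (hB : ∀ v ∈ B, ∃ u ∉ M, G.Adj v u) :
    #M ≤ #B * (G.maxDegree - 1) := by
  classical
  have hcover : M ⊆ B.biUnion fun v => G.neighborFinset v ∩ M := by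
    intro m hm
    obtain ⟨v, hv, hvm⟩ := hM m hm
    exact mem_biUnion.mpr ⟨v, hv, mem_inter.mpr ⟨(G.mem_neighborFinset v m).mpr hvm, hm⟩⟩
  refine (card_le_card hcover).trans (card_biUnion_le_card_mul _ _ _ fun v hv => ?_)
  obtain ⟨u, huM, hvu⟩ := hB v hv
  calc #(G.neighborFinset v ∩ M) ≤ #((G.neighborFinset v).erase u) :=
        card_le_card fun x hx => mem_erase.mpr
          ⟨fun hxu => huM (hxu ▸ (mem_inter.mp hx).2), (mem_inter.mp hx).1⟩
    _ = G.degree v - 1 := card_erase_of_mem ((G.mem_neighborFinset v u).mpr hvu)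
    _ ≤ G.maxDegree - 1 := Nat.sub_le_sub_right (G.degree_le_maxDegree v) 1

lemma exists_isDomSet_isIndepSet_card_le [Fintype V] [DecidableEq V] [DecidableRel G.Adj]
    {D S : Finset V} (hD : IsDomSet G D) (hS : IsIndepSet G S)
    (hSdom : ∀ v ∈ D, v ∉ S → ∃ u ∈ S, G.Adj u v) :
    ∃ I, IsDomSet G I ∧ IsIndepSet G I ∧ #I ≤ #S + #(D \ S) * (G.maxDegree - 1) := by
  set U : Finset V := {w | w ∉ S ∧ ∀ u ∈ S, ¬ G.Adj u w}
  obtain ⟨M, hMU, hM, hMmax⟩ := exists_maximum_isIndepSet_subset G U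
  have hMU' : ∀ m ∈ M, m ∉ S ∧ ∀ u ∈ S, ¬ G.Adj u m := fun m hm => (mem_filter.mp (hMU hm)).2
  refine ⟨S ∪ M, fun v hv => ?_, hS.union hM fun u hu m hm => (hMU' m hm).2 u hu,
    (card_union_le S M).trans (Nat.add_le_add_left ?_ _)⟩
  · rw [mem_union, not_or] at hv
    by_cases hvU : v ∈ U
    · obtain ⟨m, hm, hmv⟩ := exists_adj_of_maximum_isIndepSet hMU hM hMmax hvU hv.2
      exact ⟨m, mem_union_right S hm, hmv⟩
    · simp only [U, mem_filter, mem_univ, true_and, not_and, not_forall, not_not] at hvU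
      obtain ⟨u, hu, huv⟩ := hvU hv.1
      exact ⟨u, mem_union_left M hu, huv⟩
  · refine card_le_card_mul_maxDegree_sub_one (fun m hm => ?_) fun v hv => ?_
    · obtain ⟨hmS, hmadj⟩ := hMU' m hm
      have hmD : m ∉ D := fun hmD => by
        obtain ⟨u, hu, hum⟩ := hSdom m hmD hmS
        exact hmadj u hu hum
      obtain ⟨v, hv, hvm⟩ := hD m hmD
      exact ⟨v, mem_sdiff.mpr ⟨hv, fun hvS => hmadj v hvS hvm⟩, hvm⟩
    · obtain ⟨hvD, hvS⟩ := mem_sdiff.mp hv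
      obtain ⟨u, hu, huv⟩ := hSdom v hvD hvS
      exact ⟨u, fun huM => (hMU' u huM).1 hu, huv.symm⟩

theorem two_mul_indDomNum_le_maxDegree_mul_domNum [Fintype V] [DecidableRel G.Adj]
    (hG : G.IsBipartite) (hΔ : 2 ≤ G.maxDegree) :
    2 * indDomNum G ≤ G.maxDegree * domNum G := by
  classical
  obtain ⟨D, hD, hDcard⟩ := exists_isDomSet_card_eq_domNum G
  obtain ⟨S, hSD, hS, hSmax⟩ := exists_maximum_isIndepSet_subset G D
  have hhalf : #D ≤ 2 * #S := card_le_mul_of_maximum_isIndepSet hG hSmax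
  obtain ⟨I, hIdom, hIind, hIcard⟩ := exists_isDomSet_isIndepSet_card_le hD hS
    fun v hvD hvS => exists_adj_of_maximum_isIndepSet hSD hS hSmax hvD hvS
  have hi := indDomNum_le_card hIdom hIind
  have hsplit := card_sdiff_add_card_eq_card hSD
  obtain ⟨k, hk⟩ : ∃ k, G.maxDegree = k + 2 := ⟨G.maxDegree - 2, by omega⟩
  rw [show G.maxDegree - 1 = k + 1 by omega] at hIcard
  rw [← hDcard, hk]
  nlinarith [Nat.mul_le_mul_left k (show #(D \ S) ≤ #S by omega)]

end IndependentDomination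

theorem stmt3 {V : Type*} [Fintype V] (T : SimpleGraph V) [DecidableRel T.Adj]
    (htree : T.IsTree) (h : 3 ≤ T.maxDegree) :
    2 * indDomNum T ≤ T.maxDegree * domNum T :=
  two_mul_indDomNum_le_maxDegree_mul_domNum htree.isBipartite (by omega)
end

section
/- For the balanced double star S(s) with s ≥ 2 leaves on each of its two adjacent centers, the ratio i(S(s))/γ(S(s)) equals Δ(S(s))/2, i.e., 2·i(S(s)) = Δ(S(s))·γ(S(s)). -/
open Finset

/-- The balanced double star `S(s)`: centers `Sum.inl 0`, `Sum.inl 1` joined by an edge,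
and leaf `Sum.inr (c, j)` attached to center `Sum.inl c`. -/
def doubleStar (s : ℕ) : SimpleGraph (Fin 2 ⊕ (Fin 2 × Fin s)) :=
  SimpleGraph.fromRel (fun a b =>
    (a = Sum.inl 0 ∧ b = Sum.inl 1) ∨ ∃ c j, a = Sum.inl c ∧ b = Sum.inr (c, j))

/-!
A leaf's only neighbour is its centre, so a dominating set contains, for each centre, either the
centre or all `s` of its leaves. Hence the two centres form a minimum dominating set: `γ = 2`.
An independent set cannot contain both (adjacent) centres, so an independent dominating set
contains one centre and all leaves of the other, or all `2s` leaves: `i = s + 1 = Δ`.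
-/

section Domination

variable {V : Type*} {G : SimpleGraph V} {D : Finset V}

lemma IsDomSet.mem_or_mem_of_adj_iff {v w : V} (hD : IsDomSet G D)
    (hv : ∀ u, G.Adj u v ↔ u = w) : v ∈ D ∨ w ∈ D := by
  by_cases h : v ∈ D
  · exact .inl h
  · obtain ⟨u, hu, huv⟩ := hD v h
    exact .inr ((hv u).1 huv ▸ hu)

variable [Fintype V]

lemma IsDomSet.domNum_eq_card (hD : IsDomSet G D)
    (hmin : ∀ D', IsDomSet G D' → D.card ≤ D'.card) : domNum G = D.card :=
  IsLeast.csInf_eq ⟨⟨D, hD, rfl⟩, by rintro _ ⟨D', hD', rfl⟩; exact hmin D' hD'⟩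

lemma IsDomSet.indDomNum_eq_card (hD : IsDomSet G D) (hI : IsIndepSet G D)
    (hmin : ∀ D', IsDomSet G D' → IsIndepSet G D' → D.card ≤ D'.card) :
    indDomNum G = D.card :=
  IsLeast.csInf_eq ⟨⟨D, hD, hI, rfl⟩, by rintro _ ⟨D', hD', hI', rfl⟩; exact hmin D' hD' hI'⟩

end Domination

section DoubleStar

variable {s : ℕ}

@[simp] lemma doubleStar_adj_inl_inl {c c' : Fin 2} :
    (doubleStar s).Adj (.inl c) (.inl c') ↔ c ≠ c' := by
  fin_cases c <;> fin_cases c' <;> simp [doubleStar]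

@[simp] lemma doubleStar_adj_inl_inr {c c' : Fin 2} {j : Fin s} :
    (doubleStar s).Adj (.inl c) (.inr (c', j)) ↔ c = c' := by
  fin_cases c <;> fin_cases c' <;> simp [doubleStar]

@[simp] lemma doubleStar_adj_inr_inl {c c' : Fin 2} {j : Fin s} :
    (doubleStar s).Adj (.inr (c', j)) (.inl c) ↔ c = c' := by
  rw [SimpleGraph.adj_comm, doubleStar_adj_inl_inr]

@[simp] lemma doubleStar_not_adj_inr_inr {x y : Fin 2 × Fin s} :
    ¬ (doubleStar s).Adj (.inr x) (.inr y) := by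
  simp [doubleStar]

lemma doubleStar_adj_leaf_iff {c : Fin 2} {j : Fin s} (u : Fin 2 ⊕ (Fin 2 × Fin s)) :
    (doubleStar s).Adj u (.inr (c, j)) ↔ u = .inl c := by
  rcases u with c' | x <;> simp [eq_comm]

variable (s) in
def doubleStarLeaves (c : Fin 2) : Finset (Fin 2 ⊕ (Fin 2 × Fin s)) :=
  univ.map ⟨fun j => .inr (c, j), fun _ _ h => by simpa using h⟩

@[simp] lemma mem_doubleStarLeaves {c : Fin 2} {v : Fin 2 ⊕ (Fin 2 × Fin s)} :
    v ∈ doubleStarLeaves s c ↔ ∃ j, .inr (c, j) = v := by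
  simp only [doubleStarLeaves, mem_map, mem_univ, true_and]
  rfl

@[simp] lemma card_doubleStarLeaves (c : Fin 2) : (doubleStarLeaves s c).card = s := by
  simp [doubleStarLeaves]

lemma card_insert_center_doubleStarLeaves (c c' : Fin 2) :
    (insert (.inl c) (doubleStarLeaves s c')).card = s + 1 := by
  rw [card_insert_of_notMem (by simp), card_doubleStarLeaves]

lemma neighborFinset_doubleStar_inl [DecidableRel (doubleStar s).Adj] (c : Fin 2) :
    (doubleStar s).neighborFinset (.inl c) = insert (.inl c.rev) (doubleStarLeaves s c) := by
  ext v
  fin_cases c <;> rcases v with c' | ⟨c', j⟩ <;> fin_cases c' <;> simp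

lemma neighborFinset_doubleStar_inr [DecidableRel (doubleStar s).Adj] (c : Fin 2) (j : Fin s) :
    (doubleStar s).neighborFinset (.inr (c, j)) = {.inl c} := by
  ext v
  rw [SimpleGraph.mem_neighborFinset, SimpleGraph.adj_comm, doubleStar_adj_leaf_iff, mem_singleton]

lemma maxDegree_doubleStar [DecidableRel (doubleStar s).Adj] :
    (doubleStar s).maxDegree = s + 1 := by
  have hcenter (c : Fin 2) : (doubleStar s).degree (.inl c) = s + 1 := by
    rw [← SimpleGraph.card_neighborFinset_eq_degree, neighborFinset_doubleStar_inl,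
      card_insert_center_doubleStarLeaves]
  refine le_antisymm (SimpleGraph.maxDegree_le_of_forall_degree_le _ _ ?_) ?_
  · rintro (c | ⟨c, j⟩)
    · exact (hcenter c).le
    · rw [← SimpleGraph.card_neighborFinset_eq_degree, neighborFinset_doubleStar_inr]
      simp
  · exact hcenter 0 ▸ SimpleGraph.degree_le_maxDegree _ _

variable {D : Finset (Fin 2 ⊕ (Fin 2 × Fin s))}

lemma IsDomSet.doubleStarLeaves_subset (hD : IsDomSet (doubleStar s) D) {c : Fin 2}
    (hc : .inl c ∉ D) : doubleStarLeaves s c ⊆ D := by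
  rintro _ hv
  obtain ⟨j, rfl⟩ := mem_doubleStarLeaves.1 hv
  exact (hD.mem_or_mem_of_adj_iff doubleStar_adj_leaf_iff).resolve_right hc

lemma IsDomSet.two_le_card_doubleStar (hs : 0 < s) (hD : IsDomSet (doubleStar s) D) :
    2 ≤ D.card := by
  by_contra! h
  let j : Fin s := ⟨0, hs⟩
  rcases hD.mem_or_mem_of_adj_iff (doubleStar_adj_leaf_iff (c := 0) (j := j)) with h0 | h0 <;>
  rcases hD.mem_or_mem_of_adj_iff (doubleStar_adj_leaf_iff (c := 1) (j := j)) with h1 | h1 <;>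
  simpa using card_le_one.1 (by omega) _ h0 _ h1

lemma IsDomSet.succ_le_card_doubleStar (hs : 0 < s) (hD : IsDomSet (doubleStar s) D)
    (hI : IsIndepSet (doubleStar s) D) : s + 1 ≤ D.card := by
  have hcenter {c c' : Fin 2} (hc : .inl c ∈ D) (hc' : .inl c' ∉ D) : s + 1 ≤ D.card :=
    card_insert_center_doubleStarLeaves (s := s) c c' ▸
      card_le_card (insert_subset hc (hD.doubleStarLeaves_subset hc'))
  by_cases h0 : .inl 0 ∈ D
  · exact hcenter (c' := 1) h0 fun h1 => hI _ h0 _ h1 (by simp)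
  by_cases h1 : .inl 1 ∈ D
  · exact hcenter h1 h0
  have hdisj : Disjoint (doubleStarLeaves s 0) (doubleStarLeaves s 1) := by
    simp [disjoint_left]
  calc s + 1 ≤ (doubleStarLeaves s 0 ∪ doubleStarLeaves s 1).card := by
        rw [card_union_of_disjoint hdisj, card_doubleStarLeaves, card_doubleStarLeaves]; omega
    _ ≤ D.card := card_le_card <|
        union_subset (hD.doubleStarLeaves_subset h0) (hD.doubleStarLeaves_subset h1)

lemma domNum_doubleStar (hs : 0 < s) : domNum (doubleStar s) = 2 := by
  have hD : IsDomSet (doubleStar s) {.inl 0, .inl 1} := by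
    rintro (c | ⟨c, j⟩) hv
    · fin_cases c <;> simp at hv
    · exact ⟨.inl c, by fin_cases c <;> simp, by simp⟩
  have hcard : ({.inl 0, .inl 1} : Finset (Fin 2 ⊕ (Fin 2 × Fin s))).card = 2 := by simp
  rw [hD.domNum_eq_card fun D' hD' => hcard.symm ▸ hD'.two_le_card_doubleStar hs, hcard]

lemma indDomNum_doubleStar (hs : 0 < s) : indDomNum (doubleStar s) = s + 1 := by
  have hD : IsDomSet (doubleStar s) (insert (.inl 0) (doubleStarLeaves s 1)) := by
    rintro (c | ⟨c, j⟩) hv <;> refine ⟨.inl 0, mem_insert_self _ _, ?_⟩ <;>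
      fin_cases c <;> simp_all
  have hI : IsIndepSet (doubleStar s) (insert (.inl 0) (doubleStarLeaves s 1)) := by
    simp [IsIndepSet]
  have hcard := card_insert_center_doubleStarLeaves (s := s) 0 1
  rw [hD.indDomNum_eq_card hI fun D' hD' hI' => hcard ▸ hD'.succ_le_card_doubleStar hs hI', hcard]

end DoubleStar

theorem stmt7 (s : ℕ) (hs : 2 ≤ s) :
    2 * indDomNum (doubleStar s) =
      @SimpleGraph.maxDegree _ (doubleStar s) _ (Classical.decRel _) *
        domNum (doubleStar s) := by
  classical
  rw [indDomNum_doubleStar (by omega), domNum_doubleStar (by omega), maxDegree_doubleStar]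
  ring
end

section
/- If G is a finite simple graph with no induced subgraph isomorphic to K_{1,3} (claw-free), then i(G) = γ(G). -/
/-!
Among the minimum dominating sets take one, `D`, spanning as few edges as possible. If two
vertices `u, v` of `D` were adjacent, the minimality of `|D|` gives `u` an external private
neighbour `w`, and exchanging `u` for `w` keeps `D` dominating: a vertex `x` dominated by `u`
alone must be adjacent to `w`, for otherwise `u; v, w, x` would be a claw. The exchange destroys
the edge `uv` and creates none, contradicting the choice of `D`. Hence `D` is an independent
dominating set of size `γ(G)`.
-/

open Finset

section

variable {V : Type*} {G : SimpleGraph V}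

theorem SimpleGraph.adj_of_isEmpty_claw_embedding
    (hclaw : IsEmpty (completeBipartiteGraph (Fin 1) (Fin 3) ↪g G)) {a b c d : V}
    (hab : G.Adj a b) (hac : G.Adj a c) (had : G.Adj a d)
    (hbc : b ≠ c) (hbd : b ≠ d) (hcd : c ≠ d)
    (nbc : ¬ G.Adj b c) (nbd : ¬ G.Adj b d) : G.Adj c d := by
  by_contra ncd
  let f : Fin 1 ⊕ Fin 3 → V := Sum.elim (fun _ => a) ![b, c, d]
  have hf : f.Injective := by
    rintro (x | x) (y | y) h <;> fin_cases x <;> fin_cases y <;>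
      simp_all [f, hab.ne, hac.ne, had.ne, hab.ne', hac.ne', had.ne', eq_comm]
  refine hclaw.false ⟨⟨f, hf⟩, fun {x y} => ?_⟩
  rcases x with x | x <;> rcases y with y | y <;> fin_cases x <;> fin_cases y <;>
    simp_all [f, G.adj_comm]

structure IsExternalPrivateNeighbor (G : SimpleGraph V) (D : Finset V) (u w : V) : Prop where
  mem : u ∈ D
  notMem : w ∉ D
  adj : G.Adj u w
  eq_of_adj : ∀ y ∈ D, G.Adj y w → y = u

theorem IsExternalPrivateNeighbor.not_adj_of_mem_erase [DecidableEq V] {D : Finset V} {u w y : V}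
    (hw : IsExternalPrivateNeighbor G D u w) (hy : y ∈ D.erase u) : ¬ G.Adj y w :=
  fun hyw => (mem_erase.1 hy).1 (hw.eq_of_adj y (mem_of_mem_erase hy) hyw)

theorem exists_isExternalPrivateNeighbor [DecidableEq V] {D : Finset V} {u v : V}
    (hD : IsDomSet G D) (hDu : ¬ IsDomSet G (D.erase u)) (hv : v ∈ D) (huv : G.Adj u v) :
    ∃ w, IsExternalPrivateNeighbor G D u w := by
  simp only [IsDomSet, not_forall, not_exists, not_and] at hDu
  obtain ⟨w, hwDu, hw⟩ := hDu
  have hwD : w ∉ D := by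
    intro hwD
    obtain rfl : w = u := by_contra fun h => hwDu (mem_erase.2 ⟨h, hwD⟩)
    exact hw v (mem_erase.2 ⟨huv.ne', hv⟩) huv.symm
  have eq_of_adj : ∀ y ∈ D, G.Adj y w → y = u :=
    fun y hy hyw => by_contra fun h => hw y (mem_erase.2 ⟨h, hy⟩) hyw
  obtain ⟨y, hy, hyw⟩ := hD w hwD
  obtain rfl := eq_of_adj y hy hyw
  exact ⟨w, hy, hwD, hyw, eq_of_adj⟩

theorem IsDomSet.insert_erase [DecidableEq V]
    (hclaw : IsEmpty (completeBipartiteGraph (Fin 1) (Fin 3) ↪g G)) {D : Finset V} {u v w : V}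
    (hD : IsDomSet G D) (hv : v ∈ D) (huv : G.Adj u v)
    (hw : IsExternalPrivateNeighbor G D u w) : IsDomSet G (insert w (D.erase u)) := by
  intro x hx
  rw [mem_insert, mem_erase, not_or, not_and_or, not_not] at hx
  obtain ⟨hxw, hxu | hxD⟩ := hx
  · exact ⟨w, mem_insert_self _ _, hxu ▸ hw.adj.symm⟩
  obtain ⟨y, hy, hyx⟩ := hD x hxD
  obtain rfl | hyu := eq_or_ne y u
  · by_cases hvx : G.Adj v x
    · exact ⟨v, mem_insert_of_mem (mem_erase.2 ⟨huv.ne', hv⟩), hvx⟩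
    -- `y` is the centre of a would-be claw on `v, w, x`.
    have hvw : ¬ G.Adj v w := hw.not_adj_of_mem_erase (mem_erase.2 ⟨huv.ne', hv⟩)
    have hvw' : v ≠ w := fun h => hw.notMem (h ▸ hv)
    have hvx' : v ≠ x := fun h => hxD (h ▸ hv)
    exact ⟨w, mem_insert_self _ _, SimpleGraph.adj_of_isEmpty_claw_embedding hclaw huv hw.adj
      hyx hvw' hvx' (Ne.symm hxw) hvw hvx⟩
  · exact ⟨y, mem_insert_of_mem (mem_erase.2 ⟨hyu, hy⟩), hyx⟩

def adjPairs (G : SimpleGraph V) [DecidableRel G.Adj] (D : Finset V) : Finset (V × V) :=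
  (D ×ˢ D).filter fun p => G.Adj p.1 p.2

theorem adjPairs_insert_erase_ssubset [DecidableEq V] [DecidableRel G.Adj] {D : Finset V}
    {u v w : V} (hv : v ∈ D) (huv : G.Adj u v) (hw : IsExternalPrivateNeighbor G D u w) :
    adjPairs G (insert w (D.erase u)) ⊂ adjPairs G D := by
  have hmem : ∀ y ∈ insert w (D.erase u), ∀ z ∈ insert w (D.erase u), G.Adj y z →
      y ∈ D.erase u := by
    intro y hy z hz hyz
    rcases mem_insert.1 hy with rfl | hy
    · rcases mem_insert.1 hz with rfl | hz
      · exact absurd hyz G.irrefl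
      · exact absurd hyz.symm (hw.not_adj_of_mem_erase hz)
    · exact hy
  have hsub : adjPairs G (insert w (D.erase u)) ⊆ adjPairs G D := by
    intro p hp
    simp only [adjPairs, mem_filter, mem_product] at hp ⊢
    obtain ⟨⟨h1, h2⟩, h12⟩ := hp
    exact ⟨⟨mem_of_mem_erase (hmem _ h1 _ h2 h12),
      mem_of_mem_erase (hmem _ h2 _ h1 h12.symm)⟩, h12⟩
  refine (ssubset_iff_of_subset hsub).2
    ⟨(u, v), by simp [adjPairs, hw.mem, hv, huv], fun h => ?_⟩
  simp only [adjPairs, mem_filter, mem_product] at h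
  exact (mem_erase.1 (hmem _ h.1.1 _ h.1.2 h.2)).1 rfl

theorem card_insert_erase_of_isExternalPrivateNeighbor [DecidableEq V] {D : Finset V} {u w : V}
    (hw : IsExternalPrivateNeighbor G D u w) : (insert w (D.erase u)).card = D.card := by
  rw [card_insert_of_notMem fun h => hw.notMem (mem_of_mem_erase h), card_erase_add_one hw.mem]

theorem IsDomSet.exists_isIndepSet_of_card_le
    (hclaw : IsEmpty (completeBipartiteGraph (Fin 1) (Fin 3) ↪g G)) {D : Finset V}
    (hD : IsDomSet G D) (hmin : ∀ D', IsDomSet G D' → D.card ≤ D'.card) :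
    ∃ I, IsDomSet G I ∧ IsIndepSet G I ∧ I.card = D.card := by
  classical
  induction hn : (adjPairs G D).card using Nat.strong_induction_on generalizing D with
  | _ n ih =>
  by_cases hI : IsIndepSet G D
  · exact ⟨D, hD, hI, rfl⟩
  obtain ⟨u, hu, v, hv, huv⟩ : ∃ u ∈ D, ∃ v ∈ D, G.Adj u v := by
    simpa [IsIndepSet] using hI
  have hDu : ¬ IsDomSet G (D.erase u) := fun h => (card_erase_lt_of_mem hu).not_ge (hmin _ h)
  obtain ⟨w, hw⟩ := exists_isExternalPrivateNeighbor hD hDu hv huv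
  have hcard := card_insert_erase_of_isExternalPrivateNeighbor hw
  have hfewer := card_lt_card (adjPairs_insert_erase_ssubset hv huv hw)
  obtain ⟨I, hID, hII, hIcard⟩ :=
    ih _ (hn ▸ hfewer) (hD.insert_erase hclaw hv huv hw) (hcard ▸ hmin) rfl
  exact ⟨I, hID, hII, hIcard.trans hcard⟩

end

theorem stmt12 {V : Type*} [Fintype V] (G : SimpleGraph V)
    (hclaw : IsEmpty (completeBipartiteGraph (Fin 1) (Fin 3) ↪g G)) :
    indDomNum G = domNum G := by
  obtain ⟨D, hD, hDcard⟩ : domNum G ∈ {n | ∃ D : Finset V, IsDomSet G D ∧ D.card = n} :=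
    Nat.sInf_mem ⟨_, univ, fun v hv => absurd (mem_univ v) hv, rfl⟩
  obtain ⟨I, hID, hII, hIcard⟩ :=
    hD.exists_isIndepSet_of_card_le hclaw fun D' hD' => hDcard ▸ Nat.sInf_le ⟨D', hD', rfl⟩
  have hind : indDomNum G ≤ domNum G := Nat.sInf_le ⟨I, hID, hII, hIcard.trans hDcard⟩
  obtain ⟨J, hJD, -, hJcard⟩ :
      indDomNum G ∈ {n | ∃ D : Finset V, IsDomSet G D ∧ IsIndepSet G D ∧ D.card = n} :=
    Nat.sInf_mem ⟨_, I, hID, hII, rfl⟩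
  exact hind.antisymm (hJcard ▸ Nat.sInf_le ⟨J, hJD, rfl⟩)
end
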